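/- arXiv:1101.0522 — 2 statements merged into one kernel-verified Lean document; each statement's English description precedes it below -/
import Mathlib

section
/- For a unit vector α in a Euclidean space V, the map r_α is 1-Lipschitz: for all x, y ∈ V, |r_α(x) - r_α(y)| ≤ |x - y|. -/
open scoped RealInnerProductSpace
open Metric Set

variable {V : Type*} [NormedAddCommGroup V] [InnerProductSpace ℝ V] [FiniteDimensional ℝ V]

/-- Orthogonal reflection in the hyperplane orthogonal to the unit vector `α`. -/
noncomputable def sRefl (α x : V) : V := x - (2 * ⟪α, x⟫) • α

/-- The one-sided reflection `r_α`: identity on `{α·x ≥ 0}`, reflection on `{α·x ≤ 0}`,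
given by the concise formula `r_α(x) = x + 2(α·x)⁻ α`. -/
noncomputable def rRefl (α x : V) : V := x + (2 * max (-⟪α, x⟫) 0) • α

/-- `R` is a reduced root system of unit vectors. -/
def IsRootSystem (R : Finset V) : Prop :=
  (∀ α ∈ R, ‖α‖ = 1) ∧
  (∀ α ∈ R, ∀ t : ℝ, t • α ∈ R → t = 1 ∨ t = -1) ∧
  (∀ α ∈ R, ∀ β ∈ R, sRefl α β ∈ R)

/-- `Rpos` is a positive subsystem of `R`: the roots having positive inner product
against some vector `u` lying on no root hyperplane. -/
def IsPositiveSystem (R Rpos : Finset V) : Prop :=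
  ∃ u : V, (∀ β ∈ R, ⟪β, u⟫ ≠ 0) ∧ ∀ β, β ∈ Rpos ↔ β ∈ R ∧ 0 < ⟪β, u⟫

/-- `S` is the simple system associated with the positive subsystem `Rpos`. -/
def IsSimpleSystem (Rpos S : Finset V) : Prop :=
  S ⊆ Rpos ∧ LinearIndependent ℝ (fun x : (S : Set V) => (x : V)) ∧
  Submodule.span ℝ (S : Set V) = Submodule.span ℝ (Rpos : Set V) ∧
  ∀ β ∈ Rpos, ∃ c : V → ℝ, (∀ α ∈ S, 0 ≤ c α) ∧ β = ∑ α ∈ S, c α • α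

/-- The reflection group `W` generated by the reflections `s_α`, `α ∈ R`. -/
noncomputable def weylGroup (R : Finset V) : Subgroup (V ≃ₗᵢ[ℝ] V) :=
  Subgroup.closure {w : V ≃ₗᵢ[ℝ] V | ∃ α ∈ R, ∀ x, w x = sRefl α x}

/-- The facet associated with a sign pattern `(Ip, I0, Im)` on the positive roots. -/
def facet (Ip I0 Im : Finset V) : Set V :=
  {x | (∀ α ∈ Ip, 0 < ⟪α, x⟫) ∧ (∀ α ∈ I0, ⟪α, x⟫ = 0) ∧ (∀ α ∈ Im, ⟪α, x⟫ < 0)}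

/-- `(Ip, I0, Im)` is a partition of the positive system `Rpos`. -/
def IsFacetPartition (Rpos Ip I0 Im : Finset V) : Prop :=
  ((Ip : Set V) ∪ (I0 : Set V) ∪ (Im : Set V) = (Rpos : Set V)) ∧
  Disjoint (Ip : Set V) (I0 : Set V) ∧ Disjoint (Ip : Set V) (Im : Set V) ∧
  Disjoint (I0 : Set V) (Im : Set V)

/-- The closed positive Weyl chamber. -/
def closedChamber (S : Finset V) : Set V := {x | ∀ α ∈ S, 0 ≤ ⟪α, x⟫}

/-- The face `F_α` of the Weyl chamber, supported by the wall `H_α`. -/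
def faceF (S : Finset V) (α : V) : Set V :=
  {x | ⟪α, x⟫ = 0 ∧ ∀ β ∈ S, β ≠ α → 0 < ⟪β, x⟫}

/-- `r_α` is 1-Lipschitz. -/
theorem rRefl_lipschitz (α : V) (hα : ‖α‖ = 1) :
    ∀ x y : V, ‖rRefl α x - rRefl α y‖ ≤ ‖x - y‖ := by
  intro x y
  set a : ℝ := ⟪α, x⟫ with ha
  set b : ℝ := ⟪α, y⟫ with hb
  set c : ℝ := 2 * max (-a) 0 - 2 * max (-b) 0 with hc
  have hdiff : rRefl α x - rRefl α y = (x - y) + c • α := by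
    simp only [rRefl, hc, sub_smul]
    abel
  have hsq : ‖rRefl α x - rRefl α y‖ ^ 2 = ‖x - y‖ ^ 2 + (2 * c * (a - b) + c ^ 2) := by
    rw [hdiff, ← real_inner_self_eq_norm_sq, ← real_inner_self_eq_norm_sq]
    have hxy : ⟪x - y, α⟫ = a - b := by
      rw [real_inner_comm]; simp [ha, hb, inner_sub_right]
    have hαα : ⟪α, α⟫ = (1 : ℝ) := by
      rw [real_inner_self_eq_norm_sq, hα]; norm_num
    have hxy' : ⟪α, x - y⟫ = a - b := by simp [ha, hb, inner_sub_right]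
    simp only [inner_add_add_self, real_inner_smul_right, real_inner_smul_left, hxy, hxy', hαα]
    ring
  have hkey : 2 * c * (a - b) + c ^ 2 ≤ 0 := by
    rcases le_total a 0 with h1 | h1 <;> rcases le_total b 0 with h2 | h2 <;>
      simp only [hc, max_eq_left, max_eq_right, neg_nonneg, Left.nonneg_neg_iff, h1, h2,
        neg_nonpos_of_nonneg] <;> nlinarith
  have : ‖rRefl α x - rRefl α y‖ ^ 2 ≤ ‖x - y‖ ^ 2 := by rw [hsq]; linarith
  nlinarith [norm_nonneg (rRefl α x - rRefl α y), norm_nonneg (x - y)]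
end

section
/- The map π sending x ∈ V to the unique point of its W-orbit in the closed Weyl chamber C̄ is 1-Lipschitz: |π(x) - π(y)| ≤ |x - y| for all x, y ∈ V. -/
open scoped RealInnerProductSpace
open Metric Set

variable {V : Type*} [NormedAddCommGroup V] [InnerProductSpace ℝ V] [FiniteDimensional ℝ V]

/-!
For `a, c` in the closed chamber and `w ∈ W` one has `⟪a, w c⟫ ≤ ⟪a, c⟫`. Writing `w` as a word in
simple reflections, this follows by induction on the length of the word: removing the last letter
`s_α` changes the inner product by `-2⟪α, c⟫⟪a, w' α⟫`, which is `≤ 0` when `w' α` is a positive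
root, and when it is not, the deletion condition shortens `w' s_α` by two letters instead.
Given this inequality, `‖π x - π y‖² = ‖x‖² + ‖y‖² - 2⟪π x, π y⟫` is at most
`‖x‖² + ‖y‖² - 2⟪π x, w y⟫ = ‖x - y‖²`, where `w x = π x`.
-/

section

variable {E : Type*} [NormedAddCommGroup E] [InnerProductSpace ℝ E]

section Reflections

variable {α : E}

theorem reflection_orthogonalComplement_singleton_apply (hα : ‖α‖ = 1) (x : E) :
    (ℝ ∙ α)ᗮ.reflection x = sRefl α x := by
  rw [Submodule.reflection_orthogonal_apply, Submodule.reflection_apply,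
    Submodule.starProjection_unit_singleton ℝ hα, sRefl, two_smul, two_mul, add_smul]
  abel

theorem sRefl_neg (α x : E) : sRefl (-α) x = sRefl α x := by
  simp [sRefl, inner_neg_left, smul_neg]

theorem reflection_orthogonalComplement_singleton_conj (g : E ≃ₗᵢ[ℝ] E) (hα : ‖α‖ = 1) :
    (ℝ ∙ g α)ᗮ.reflection = g * (ℝ ∙ α)ᗮ.reflection * g⁻¹ := by
  ext x
  have hgα : ‖g α‖ = 1 := by rwa [g.norm_map]
  obtain ⟨y, rfl⟩ := g.surjective x
  simp [reflection_orthogonalComplement_singleton_apply hgα,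
    reflection_orthogonalComplement_singleton_apply hα, LinearIsometryEquiv.inv_def, sRefl]

end Reflections

noncomputable def reflProd (l : List E) : E ≃ₗᵢ[ℝ] E :=
  (l.map fun γ => (ℝ ∙ γ)ᗮ.reflection).prod

@[simp] theorem reflProd_nil : reflProd ([] : List E) = 1 := rfl

@[simp] theorem reflProd_cons (γ : E) (l : List E) :
    reflProd (γ :: l) = (ℝ ∙ γ)ᗮ.reflection * reflProd l := by
  simp [reflProd]

@[simp] theorem reflProd_singleton (γ : E) : reflProd [γ] = (ℝ ∙ γ)ᗮ.reflection := by
  simp [reflProd]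

@[simp] theorem reflProd_append (l₁ l₂ : List E) :
    reflProd (l₁ ++ l₂) = reflProd l₁ * reflProd l₂ := by
  simp [reflProd]

theorem reflProd_reverse (l : List E) : reflProd l.reverse = (reflProd l)⁻¹ := by
  simp [reflProd, List.prod_inv_reverse, Function.comp_def, Submodule.reflection_inv]

section RootSystem

variable {R Rpos S : Finset E}

theorem IsRootSystem.neg_mem (hR : IsRootSystem R) {β : E} (hβ : β ∈ R) : -β ∈ R := by
  have h := hR.2.2 β hβ β hβ
  rwa [← reflection_orthogonalComplement_singleton_apply (hR.1 β hβ),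
    Submodule.reflection_orthogonalComplement_singleton_eq_neg] at h

theorem IsPositiveSystem.subset (hpos : IsPositiveSystem R Rpos) : Rpos ⊆ R := by
  obtain ⟨u, -, hu⟩ := hpos
  exact fun β hβ => ((hu β).mp hβ).1

theorem IsPositiveSystem.mem_or_neg_mem (hR : IsRootSystem R) (hpos : IsPositiveSystem R Rpos)
    {β : E} (hβ : β ∈ R) : β ∈ Rpos ∨ -β ∈ Rpos := by
  obtain ⟨u, hu0, hu⟩ := hpos
  rcases (hu0 β hβ).lt_or_gt with h | h
  · exact .inr ((hu (-β)).mpr ⟨hR.neg_mem hβ, by rw [inner_neg_left]; linarith⟩)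
  · exact .inl ((hu β).mpr ⟨hβ, h⟩)

theorem IsPositiveSystem.neg_notMem (hpos : IsPositiveSystem R Rpos) {β : E} (hβ : β ∈ Rpos) :
    -β ∉ Rpos := by
  obtain ⟨u, -, hu⟩ := hpos
  intro h
  have h₁ := ((hu β).mp hβ).2
  have h₂ := ((hu (-β)).mp h).2
  rw [inner_neg_left] at h₂
  linarith

theorem IsSimpleSystem.inner_nonneg (hS : IsSimpleSystem Rpos S) {β a : E} (hβ : β ∈ Rpos)
    (ha : a ∈ closedChamber S) : 0 ≤ ⟪β, a⟫ := by
  obtain ⟨c, hc, rfl⟩ := hS.2.2.2 β hβ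
  rw [sum_inner]
  exact Finset.sum_nonneg fun γ hγ => by
    rw [real_inner_smul_left]; exact mul_nonneg (hc γ hγ) (ha γ hγ)

theorem IsSimpleSystem.sRefl_mem (hR : IsRootSystem R) (hpos : IsPositiveSystem R Rpos)
    (hS : IsSimpleSystem Rpos S) {α β : E} (hα : α ∈ S) (hβ : β ∈ Rpos) (hne : β ≠ α) :
    sRefl α β ∈ Rpos := by
  classical
  have hαR : α ∈ R := hpos.subset (hS.1 hα)
  by_contra hnot
  have hneg : -sRefl α β ∈ Rpos :=
    (hpos.mem_or_neg_mem hR (hR.2.2 α hαR β (hpos.subset hβ))).resolve_left hnot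
  obtain ⟨c, hc, hcβ⟩ := hS.2.2.2 β hβ
  obtain ⟨d, hd, hdβ⟩ := hS.2.2.2 _ hneg
  -- `β + (-s_α β) = 2⟪α, β⟫ α`, so the coefficients of `β` vanish off `α`.
  have hsum : ∑ γ ∈ S, (c γ + d γ - (Pi.single α (2 * ⟪α, β⟫) : E → ℝ) γ) • γ = 0 := by
    simp only [sub_smul, add_smul, Finset.sum_sub_distrib, Finset.sum_add_distrib,
      Pi.single_apply, ite_smul, zero_smul, Finset.sum_ite_eq', if_pos hα, ← hcβ, ← hdβ, sRefl]
    abel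
  have hli : LinearIndepOn ℝ id (S : Set E) := hS.2.1
  have hcoeff := linearIndepOn_finset_iff.mp hli _ hsum
  have hβα : β = c α • α := by
    rw [hcβ, Finset.sum_eq_single_of_mem α hα]
    intro γ hγ hγα
    have := hcoeff γ hγ
    rw [Pi.single_eq_of_ne hγα, sub_zero] at this
    rw [show c γ = 0 by linarith [hc γ hγ, hd γ hγ], zero_smul]
  rcases hR.2.1 α hαR (c α) (hβα ▸ hpos.subset hβ) with h | h
  · exact hne (by rw [hβα, h, one_smul])
  · exact hpos.neg_notMem (hS.1 hα) (by rwa [hβα, h, neg_one_smul] at hβ)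

theorem IsSimpleSystem.exists_inner_pos (hR : IsRootSystem R) (hpos : IsPositiveSystem R Rpos)
    (hS : IsSimpleSystem Rpos S) {β : E} (hβ : β ∈ Rpos) : ∃ α ∈ S, 0 < ⟪α, β⟫ := by
  by_contra! h
  obtain ⟨c, hc, hcβ⟩ := hS.2.2.2 β hβ
  have hββ : ⟪β, β⟫ ≤ 0 := by
    nth_rewrite 1 [hcβ]
    rw [sum_inner]
    exact Finset.sum_nonpos fun γ hγ => by
      rw [real_inner_smul_left]; exact mul_nonpos_of_nonneg_of_nonpos (hc γ hγ) (h γ hγ)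
  rw [real_inner_self_eq_norm_sq, hR.1 β (hpos.subset hβ)] at hββ
  norm_num at hββ

theorem IsSimpleSystem.exists_reflProd_eq (hR : IsRootSystem R) (hpos : IsPositiveSystem R Rpos)
    (hS : IsSimpleSystem Rpos S) {β : E} (hβ : β ∈ Rpos) :
    ∃ l : List E, (∀ γ ∈ l, γ ∈ S) ∧ ∃ α ∈ S, β = reflProd l α := by
  classical
  obtain ⟨u, -, hu⟩ := id hpos
  by_contra! hβbad
  -- A counterexample `β` minimizing `⟪β, u⟫`; then `s_α β` is a smaller one.
  obtain ⟨β, hβmem, hmin⟩ := (Rpos.filter fun β => ∀ l : List E, (∀ γ ∈ l, γ ∈ S) →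
      ∀ α ∈ S, β ≠ reflProd l α).exists_min_image (⟪·, u⟫) ⟨β, by simpa using ⟨hβ, hβbad⟩⟩
  rw [Finset.mem_filter] at hβmem
  obtain ⟨hβ, hbad⟩ := hβmem
  obtain ⟨α, hα, hαβ⟩ := hS.exists_inner_pos hR hpos hβ
  have hα1 : ‖α‖ = 1 := hR.1 α (hpos.subset (hS.1 hα))
  have hne : β ≠ α := fun h => hbad [] (by simp) α hα (by simpa using h)
  have hβ' := hS.sRefl_mem hR hpos hα hβ hne
  have hlt : ⟪sRefl α β, u⟫ < ⟪β, u⟫ := by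
    have hαu := ((hu α).mp (hS.1 hα)).2
    rw [sRefl, inner_sub_left, real_inner_smul_left]
    nlinarith
  obtain ⟨l, hl, α', hα', hword⟩ : ∃ l : List E, (∀ γ ∈ l, γ ∈ S) ∧ ∃ α' ∈ S,
      sRefl α β = reflProd l α' := by
    by_contra! h
    exact hlt.not_ge (hmin _ (Finset.mem_filter.mpr ⟨hβ', h⟩))
  refine hbad (α :: l) (by simpa [hα] using hl) α' hα' ?_
  rw [reflProd_cons, LinearIsometryEquiv.coe_mul, Function.comp_apply, ← hword,
    ← reflection_orthogonalComplement_singleton_apply hα1, Submodule.reflection_reflection]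

theorem IsSimpleSystem.exists_reflProd_of_mem_weylGroup (hR : IsRootSystem R)
    (hpos : IsPositiveSystem R Rpos) (hS : IsSimpleSystem Rpos S) {g : E ≃ₗᵢ[ℝ] E}
    (hg : g ∈ weylGroup R) : ∃ l : List E, (∀ γ ∈ l, γ ∈ S) ∧ g = reflProd l := by
  induction hg using Subgroup.closure_induction with
  | mem w hw =>
    obtain ⟨β, hβ, hwβ⟩ := hw
    obtain ⟨β', hβ', hsame⟩ : ∃ β' ∈ Rpos, ∀ x, sRefl β' x = sRefl β x := by
      rcases hpos.mem_or_neg_mem hR hβ with h | h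
      · exact ⟨β, h, fun _ => rfl⟩
      · exact ⟨-β, h, sRefl_neg β⟩
    obtain ⟨l, hl, α, hα, rfl⟩ := hS.exists_reflProd_eq hR hpos hβ'
    have hα1 : ‖α‖ = 1 := hR.1 α (hpos.subset (hS.1 hα))
    have hw : w = (ℝ ∙ reflProd l α)ᗮ.reflection := by
      ext x
      rw [hwβ, ← hsame,
        reflection_orthogonalComplement_singleton_apply ((reflProd l).norm_map α ▸ hα1)]
    refine ⟨l ++ [α] ++ l.reverse, ?_, ?_⟩
    · simp only [List.mem_append, List.mem_reverse, List.mem_singleton]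
      rintro γ ((h | rfl) | h) <;> first | exact hα | exact hl γ h
    · rw [hw, reflection_orthogonalComplement_singleton_conj _ hα1, reflProd_append,
        reflProd_append, reflProd_reverse]
      simp [reflProd]
  | one => exact ⟨[], by simp, rfl⟩
  | mul x y _ _ ihx ihy =>
    obtain ⟨l₁, hl₁, rfl⟩ := ihx
    obtain ⟨l₂, hl₂, rfl⟩ := ihy
    exact ⟨l₁ ++ l₂, by simpa using fun γ h => h.elim (hl₁ γ) (hl₂ γ), (reflProd_append _ _).symm⟩
  | inv x _ ihx =>
    obtain ⟨l, hl, rfl⟩ := ihx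
    exact ⟨l.reverse, by simpa using hl, (reflProd_reverse l).symm⟩

/-- The deletion condition. -/
theorem IsSimpleSystem.exists_reflProd_mul_eq (hR : IsRootSystem R)
    (hpos : IsPositiveSystem R Rpos) (hS : IsSimpleSystem Rpos S) {α : E} (hα : α ∈ S)
    (l : List E) (hl : ∀ γ ∈ l, γ ∈ S) (hnot : reflProd l α ∉ Rpos) :
    ∃ l' : List E, (∀ γ ∈ l', γ ∈ S) ∧ l'.length + 1 = l.length ∧
      reflProd l * (ℝ ∙ α)ᗮ.reflection = reflProd l' := by
  have hα1 : ‖α‖ = 1 := hR.1 α (hpos.subset (hS.1 hα))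
  induction l with
  | nil => simp [hS.1 hα] at hnot
  | cons γ t ih =>
    have hγ : γ ∈ S := hl γ (by simp)
    have ht : ∀ x ∈ t, x ∈ S := fun x hx => hl x (by simp [hx])
    by_cases htα : reflProd t α ∈ Rpos
    · have hγ1 : ‖γ‖ = 1 := hR.1 γ (hpos.subset (hS.1 hγ))
      have heq : reflProd t α = γ := by
        by_contra hne
        apply hnot
        rw [reflProd_cons, LinearIsometryEquiv.coe_mul, Function.comp_apply,
          reflection_orthogonalComplement_singleton_apply hγ1]
        exact hS.sRefl_mem hR hpos hγ htα hne
      refine ⟨t, ht, by simp, ?_⟩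
      rw [reflProd_cons, ← heq, reflection_orthogonalComplement_singleton_conj _ hα1]
      simp [mul_assoc, Submodule.reflection_mul_reflection]
    · obtain ⟨t', ht', hlen, heq⟩ := ih ht htα
      exact ⟨γ :: t', by simpa [hγ] using ht', by simp [hlen], by simp [mul_assoc, heq]⟩

theorem IsSimpleSystem.inner_reflProd_le (hR : IsRootSystem R) (hpos : IsPositiveSystem R Rpos)
    (hS : IsSimpleSystem Rpos S) {a c : E} (ha : a ∈ closedChamber S)
    (hc : c ∈ closedChamber S) (l : List E) (hl : ∀ γ ∈ l, γ ∈ S) :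
    ⟪a, reflProd l c⟫ ≤ ⟪a, c⟫ := by
  induction hn : l.length using Nat.strong_induction_on generalizing l with
  | _ n ih =>
  rcases l.eq_nil_or_concat with rfl | ⟨l', α, rfl⟩
  · simp
  simp only [List.concat_eq_append, List.mem_append, List.mem_singleton] at hl ⊢
  have hα : α ∈ S := hl α (.inr rfl)
  have hl' : ∀ γ ∈ l', γ ∈ S := fun γ h => hl γ (.inl h)
  have hlen : l'.length < n := by simp [← hn]
  by_cases hsign : 0 ≤ ⟪a, reflProd l' α⟫
  · have hsplit : ⟪a, reflProd (l' ++ [α]) c⟫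
        = ⟪a, reflProd l' c⟫ - 2 * ⟪α, c⟫ * ⟪a, reflProd l' α⟫ := by
      rw [reflProd_append, LinearIsometryEquiv.coe_mul, Function.comp_apply, reflProd_singleton,
        reflection_orthogonalComplement_singleton_apply (hR.1 α (hpos.subset (hS.1 hα))),
        sRefl, map_sub, map_smul, inner_sub_right, real_inner_smul_right]
    have := ih _ hlen l' hl' rfl
    nlinarith [hc α hα]
  · have hnot : reflProd l' α ∉ Rpos := fun h =>
      hsign (real_inner_comm a _ ▸ hS.inner_nonneg h ha)
    obtain ⟨l'', hl'', hlen'', heq⟩ := hS.exists_reflProd_mul_eq hR hpos hα l' hl' hnot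
    rw [reflProd_append, reflProd_singleton, heq]
    exact ih _ (by omega) l'' hl'' rfl

theorem IsSimpleSystem.norm_sub_le_norm_sub_apply (hR : IsRootSystem R)
    (hpos : IsPositiveSystem R Rpos) (hS : IsSimpleSystem Rpos S) {a c : E}
    (ha : a ∈ closedChamber S) (hc : c ∈ closedChamber S) {w : E ≃ₗᵢ[ℝ] E}
    (hw : w ∈ weylGroup R) : ‖a - c‖ ≤ ‖a - w c‖ := by
  obtain ⟨l, hl, rfl⟩ := hS.exists_reflProd_of_mem_weylGroup hR hpos hw
  have h := hS.inner_reflProd_le hR hpos ha hc l hl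
  rw [← sq_le_sq₀ (norm_nonneg _) (norm_nonneg _), norm_sub_sq_real, norm_sub_sq_real,
    LinearIsometryEquiv.norm_map]
  linarith

end RootSystem

end

/-- the map `π` sending `x` to the unique point of its `W`-orbit in
the closed Weyl chamber is 1-Lipschitz. -/
theorem projection_lipschitz (R Rpos S : Finset V) (hR : IsRootSystem R)
    (hpos : IsPositiveSystem R Rpos) (hS : IsSimpleSystem Rpos S)
    (pi : V → V)
    (hpi : ∀ x : V, pi x ∈ closedChamber S ∧ ∃ w ∈ weylGroup R, w x = pi x) :
    ∀ x y : V, ‖pi x - pi y‖ ≤ ‖x - y‖ := by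
  intro x y
  obtain ⟨hx, wx, hwx, hwxx⟩ := hpi x
  obtain ⟨hy, wy, hwy, hwyy⟩ := hpi y
  calc ‖pi x - pi y‖
      ≤ ‖pi x - (wx * wy⁻¹) (pi y)‖ :=
        hS.norm_sub_le_norm_sub_apply hR hpos hx hy (mul_mem hwx (inv_mem hwy))
    _ = ‖x - y‖ := by
        rw [← hwxx, ← hwyy, LinearIsometryEquiv.coe_mul, Function.comp_apply,
          LinearIsometryEquiv.inv_def, LinearIsometryEquiv.symm_apply_apply, ← map_sub,
          LinearIsometryEquiv.norm_map]
end
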